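/- Let u ≥ 0 be continuous on B̄_r(x₀), Δu ≥ 1 on {u > 0} ∩ B_r(x₀) (in the distributional/viscosity sense), and x₀ ∈ ∂{u>0}. Then sup_{∂B_r(x₀)} u ≥ r²/(8N). -/

import Mathlib

open MeasureTheory Metric

variable {N : ℕ}

/-- Pointwise Laplacian of `f : ℝ^N → ℝ`. -/
noncomputable def laplacian (f : EuclideanSpace ℝ (Fin N) → ℝ)
    (x : EuclideanSpace ℝ (Fin N)) : ℝ :=
  ∑ i : Fin N,
    fderiv ℝ (fun y => fderiv ℝ f y (EuclideanSpace.single i 1)) x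
      (EuclideanSpace.single i 1)

/-!
Fix `y` with `u y > 0` within `r / 4` of `x₀` and put `c = 1 / (4N)`. On
`Ω = {u > 0} ∩ B_r(x₀)` the function `w = u - c‖· - y‖²` has `Δw ≥ 1 - 2cN > 0`, so `w` cannot
have an interior local maximum there. Hence its maximum over `closure Ω`, which is at least
`w y = u y > 0`, is attained neither in `Ω` nor where `u ≤ 0`, i.e. at some `z` on the sphere.
There `u z ≥ c‖z - y‖² ≥ c (3r/4)² ≥ r² / (8N)`.

Since `laplacian` is built from `fderiv`, which is `0` where `u` is not differentiable, the
interior-maximum step is a second-derivative test along coordinate lines that uses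
differentiability of `u` only at points where the directional derivative is nonzero.
-/

open Set Filter Topology

theorem mul_sub_lt_sub_of_hasDerivAt {f f' : ℝ → ℝ} {a b C : ℝ} (hab : a < b)
    (hc : ContinuousOn f (Icc a b)) (hf : ∀ x ∈ Ioo a b, HasDerivAt f (f' x) x)
    (hlt : ∀ x ∈ Ioo a b, C < f' x) : C * (b - a) < f b - f a := by
  refine (convex_Icc a b).mul_sub_lt_image_sub_of_lt_deriv hc (fun x hx => ?_) (fun x hx => ?_)
    a (left_mem_Icc.mpr hab.le) b (right_mem_Icc.mpr hab.le) hab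
  all_goals rw [interior_Icc] at hx
  · exact (hf x hx).differentiableAt.differentiableWithinAt
  · exact (hf x hx).deriv ▸ hlt x hx

theorem HasDerivAt.eventually_mul_sub_pos {g : ℝ → ℝ} {a x₀ : ℝ} (hg : HasDerivAt g a x₀)
    (ha : 0 < a) : ∀ᶠ x in 𝓝[≠] x₀, 0 < (g x - g x₀) * (x - x₀) := by
  filter_upwards [(hasDerivAt_iff_tendsto_slope.mp hg).eventually (eventually_gt_nhds ha),
    self_mem_nhdsWithin] with x hslope hx
  rw [slope_def_field] at hslope
  have hx : x - x₀ ≠ 0 := sub_ne_zero.mpr hx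
  have hsq : (g x - g x₀) * (x - x₀) = (g x - g x₀) / (x - x₀) * (x - x₀) ^ 2 := by
    field_simp
  exact hsq ▸ mul_pos hslope (pow_two_pos_of_ne_zero hx)

theorem IsLocalMax.nonpos_of_hasDerivAt_of_eventually_hasDerivAt {f f' : ℝ → ℝ} {x₀ a : ℝ}
    (hmax : IsLocalMax f x₀) (hc : ContinuousAt f x₀)
    (hf : ∀ᶠ x in 𝓝[≠] x₀, HasDerivAt f (f' x) x) (hf' : HasDerivAt f' a x₀) : a ≤ 0 := by
  by_contra! ha
  have hsign := hf'.eventually_mul_sub_pos ha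
  obtain ⟨δ, hδ, hball⟩ := Metric.eventually_nhds_iff.mp
    (eventually_nhdsWithin_iff.mp (hf.and (hsign.and (nhdsWithin_le_nhds hmax))))
  obtain ⟨s, hs, hsδ⟩ : ∃ s, 0 < s ∧ s < δ := ⟨δ / 2, half_pos hδ, half_lt_self hδ⟩
  -- `f' - f' x₀` has the sign of `x - x₀`, so by the mean value theorem
  -- `f (x₀ + s) + f (x₀ - s) > 2 f x₀`, against the maximality of `f x₀`.
  have hnear : ∀ x ∈ Icc (x₀ - s) (x₀ + s), x ≠ x₀ →
      HasDerivAt f (f' x) x ∧ 0 < (f' x - f' x₀) * (x - x₀) ∧ f x ≤ f x₀ := fun x hx hne =>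
    hball (by rw [Real.dist_eq, abs_lt]; constructor <;> linarith [hx.1, hx.2]) hne
  have hcont : ContinuousOn f (Icc (x₀ - s) (x₀ + s)) := fun x hx => by
    rcases eq_or_ne x x₀ with rfl | hne
    · exact hc.continuousWithinAt
    · exact (hnear x hx hne).1.continuousAt.continuousWithinAt
  have hright : f' x₀ * s < f (x₀ + s) - f x₀ := by
    have hmem : ∀ x ∈ Ioo x₀ (x₀ + s), x ∈ Icc (x₀ - s) (x₀ + s) := fun x hx =>
      ⟨by linarith [hx.1], hx.2.le⟩
    simpa using mul_sub_lt_sub_of_hasDerivAt (by linarith)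
      (hcont.mono (Icc_subset_Icc_left (by linarith)))
      (fun x hx => (hnear x (hmem x hx) hx.1.ne').1)
      (fun x hx => by nlinarith [(hnear x (hmem x hx) hx.1.ne').2.1, hx.1])
  have hleft : f x₀ - f (x₀ - s) < f' x₀ * s := by
    have hmem : ∀ x ∈ Ioo (x₀ - s) x₀, x ∈ Icc (x₀ - s) (x₀ + s) := fun x hx =>
      ⟨hx.1.le, by linarith [hx.2]⟩
    have := mul_sub_lt_sub_of_hasDerivAt (f := fun x => -f x) (C := -f' x₀) (by linarith)
      (hcont.mono (Icc_subset_Icc_right (by linarith))).neg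
      (fun x hx => (hnear x (hmem x hx) hx.2.ne).1.neg)
      (fun x hx => by nlinarith [(hnear x (hmem x hx) hx.2.ne).2.1, hx.2])
    linarith
  have h₁ := (hnear (x₀ + s) ⟨by linarith, le_rfl⟩ (by linarith)).2.2
  have h₂ := (hnear (x₀ - s) ⟨le_rfl, by linarith⟩ (by linarith)).2.2
  linarith

theorem IsLocalMax.fderiv_fderiv_le_of_sub_sq {E : Type*} [NormedAddCommGroup E]
    [InnerProductSpace ℝ E] {u : E → ℝ} {y z : E} {c : ℝ} (hc : 0 ≤ c)
    (hu : ContinuousAt u z) (hmax : IsLocalMax (fun x => u x - c * ‖x - y‖ ^ 2) z) (e : E) :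
    fderiv ℝ (fun x => fderiv ℝ u x e) z e ≤ 2 * c * ‖e‖ ^ 2 := by
  set a := fderiv ℝ (fun x => fderiv ℝ u x e) z e
  by_contra! ha
  have hg : DifferentiableAt ℝ (fun x => fderiv ℝ u x e) z := by
    by_contra h
    simp only [a, fderiv_zero_of_not_differentiableAt h, zero_apply] at ha
    nlinarith [sq_nonneg ‖e‖]
  have hline : ∀ t : ℝ, HasDerivAt (fun t : ℝ => z + t • e) e t := fun t => by
    simpa using ((hasDerivAt_id t).smul_const e).const_add z
  have hG : HasDerivAt (fun t : ℝ => fderiv ℝ u (z + t • e) e) a 0 :=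
    hg.hasFDerivAt.comp_hasDerivAt_of_eq 0 (hline 0) (by simp)
  have hq : ∀ t : ℝ, HasDerivAt (fun t : ℝ => c * ‖z + t • e - y‖ ^ 2)
      (c * (2 * inner ℝ (z + t • e - y) e)) t := fun t =>
    (((hline t).sub_const y).norm_sq).const_mul c
  have hq' : HasDerivAt (fun t : ℝ => c * (2 * inner ℝ (z + t • e - y) e))
      (c * (2 * inner ℝ e e)) 0 := by
    simpa using ((((hline 0).sub_const y).inner ℝ (hasDerivAt_const 0 e)).const_mul 2).const_mul c
  have hmax' : IsLocalMax (fun t : ℝ => u (z + t • e) - c * ‖z + t • e - y‖ ^ 2) 0 := by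
    have h : IsLocalMax (fun x => u x - c * ‖x - y‖ ^ 2) (z + (0 : ℝ) • e) := by simpa using hmax
    exact IsLocalMax.comp_continuous (g := fun t : ℝ => z + t • e) h (hline 0).continuousAt
  have hcont : ContinuousAt (fun t : ℝ => u (z + t • e) - c * ‖z + t • e - y‖ ^ 2) 0 :=
    (hu.comp_of_eq (hline 0).continuousAt (by simp)).sub (hq 0).continuousAt
  -- for small `t ≠ 0` the directional derivative is nonzero, which forces differentiability
  have hderiv : ∀ᶠ t in 𝓝[≠] (0 : ℝ), HasDerivAt
      (fun t : ℝ => u (z + t • e) - c * ‖z + t • e - y‖ ^ 2)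
      (fderiv ℝ u (z + t • e) e - c * (2 * inner ℝ (z + t • e - y) e)) t := by
    have ha0 : a ≠ 0 := by nlinarith [sq_nonneg ‖e‖]
    filter_upwards [hG.eventually_ne (c := 0) ha0] with t ht
    have hdu : DifferentiableAt ℝ u (z + t • e) := by
      by_contra h
      simp [fderiv_zero_of_not_differentiableAt h] at ht
    exact (hdu.hasFDerivAt.comp_hasDerivAt t (hline t)).sub (hq t)
  have key := hmax'.nonpos_of_hasDerivAt_of_eventually_hasDerivAt hcont hderiv (hG.sub hq')
  rw [real_inner_self_eq_norm_sq] at key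
  linarith

theorem laplacian_le_of_isLocalMax {u : EuclideanSpace ℝ (Fin N) → ℝ}
    {y z : EuclideanSpace ℝ (Fin N)} {c : ℝ} (hc : 0 ≤ c) (hu : ContinuousAt u z)
    (hmax : IsLocalMax (fun x => u x - c * ‖x - y‖ ^ 2) z) : laplacian u z ≤ 2 * c * N :=
  calc laplacian u z ≤ ∑ _i : Fin N, 2 * c := Finset.sum_le_sum fun i _ => by
        simpa using hmax.fderiv_fderiv_le_of_sub_sq hc hu (EuclideanSpace.single i 1)
    _ = 2 * c * N := by simp [mul_comm]

theorem exists_mem_sphere_add_le_of_laplacian {u : EuclideanSpace ℝ (Fin N) → ℝ}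
    {x₀ y : EuclideanSpace ℝ (Fin N)} {r c : ℝ} (hc : 0 ≤ c)
    (hcont : ContinuousOn u (closedBall x₀ r))
    (hpde : ∀ x ∈ ball x₀ r, 0 < u x → 2 * c * N < laplacian u x)
    (hy : y ∈ ball x₀ r) (hyu : 0 < u y) :
    ∃ z ∈ sphere x₀ r, u y + c * ‖z - y‖ ^ 2 ≤ u z := by
  set Ω := ball x₀ r ∩ u ⁻¹' Ioi 0
  have hΩ : IsOpen Ω :=
    (hcont.mono ball_subset_closedBall).isOpen_inter_preimage isOpen_ball isOpen_Ioi
  have hyΩ : y ∈ closure Ω := subset_closure ⟨hy, hyu⟩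
  have hK : closure Ω ⊆ closedBall x₀ r :=
    closure_minimal (inter_subset_left.trans ball_subset_closedBall) isClosed_closedBall
  obtain ⟨z, hzK, hzmax⟩ :=
    ((isCompact_closedBall x₀ r).of_isClosed_subset isClosed_closure hK).exists_isMaxOn ⟨y, hyΩ⟩
      ((hcont.mono hK).sub (by fun_prop : Continuous fun x => c * ‖x - y‖ ^ 2).continuousOn)
  have hyz : u y ≤ u z - c * ‖z - y‖ ^ 2 := by simpa using hzmax hyΩ
  have hzΩ : z ∉ Ω := fun hz => by
    have hu : ContinuousAt u z :=
      hcont.continuousAt (mem_of_superset (isOpen_ball.mem_nhds hz.1) ball_subset_closedBall)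
    have := laplacian_le_of_isLocalMax hc hu
      (hzmax.isLocalMax (mem_of_superset (hΩ.mem_nhds hz) subset_closure))
    linarith [hpde z hz.1 hz.2]
  refine ⟨z, ?_, by linarith⟩
  rcases (mem_closedBall.mp (hK hzK)).lt_or_eq with hlt | heq
  · have : u z ≤ 0 := not_lt.mp fun h => hzΩ ⟨hlt, h⟩
    nlinarith [norm_nonneg (z - y)]
  · exact heq

theorem stmt13_general (N : ℕ) (r : ℝ) (hr : 0 < r)
    (x₀ : EuclideanSpace ℝ (Fin N)) (u : EuclideanSpace ℝ (Fin N) → ℝ)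
    (hcont : ContinuousOn u (closedBall x₀ r))
    (hpde : ∀ x ∈ ball x₀ r, 0 < u x → 1 ≤ laplacian u x)
    (hfb : x₀ ∈ frontier {x | 0 < u x}) :
    r ^ 2 / (8 * N) ≤ sSup (u '' sphere x₀ r) := by
  obtain ⟨y, hyu : 0 < u y, hy⟩ :=
    Metric.mem_closure_iff.mp (frontier_subset_closure hfb) (r / 4) (by positivity)
  set c : ℝ := 1 / (4 * N)
  have hcN : 2 * c * N < 1 := by
    rcases Nat.eq_zero_or_pos N with rfl | hN
    · simp
    · rw [show 2 * c * N = 1 / 2 by simp only [c]; field_simp; ring]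
      norm_num
  obtain ⟨z, hz, hyz⟩ := exists_mem_sphere_add_le_of_laplacian (by positivity) hcont
    (fun x hx hux => hcN.trans_le (hpde x hx hux))
    (mem_ball.mpr (by rw [dist_comm]; linarith)) hyu
  have hzy : 3 * r / 4 ≤ ‖z - y‖ := by
    rw [← dist_eq_norm]
    linarith [dist_triangle z y x₀, mem_sphere.mp hz, dist_comm x₀ y]
  have hbdd : BddAbove (u '' sphere x₀ r) :=
    ((isCompact_sphere x₀ r).image_of_continuousOn (hcont.mono sphere_subset_closedBall)).bddAbove
  calc r ^ 2 / (8 * N) ≤ 9 / 8 * (r ^ 2 / (8 * N)) := by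
        linarith [show 0 ≤ r ^ 2 / (8 * N) by positivity]
    _ = c * (3 * r / 4) ^ 2 := by ring
    _ ≤ c * ‖z - y‖ ^ 2 := by gcongr
    _ ≤ u z := by linarith
    _ ≤ sSup (u '' sphere x₀ r) := le_csSup hbdd ⟨z, hz, rfl⟩

/-- non-degeneracy: if `u ≥ 0` is continuous on `B̄_r(x₀)`,
satisfies `Δu ≥ 1` on `{u > 0} ∩ B_r(x₀)`, and `x₀` is a free boundary point,
then `sup_{∂B_r(x₀)} u ≥ r²/(8N)`. -/
theorem stmt13 (N : ℕ) (hN : 1 ≤ N) (r : ℝ) (hr : 0 < r)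
    (x₀ : EuclideanSpace ℝ (Fin N)) (u : EuclideanSpace ℝ (Fin N) → ℝ)
    (hcont : ContinuousOn u (closedBall x₀ r))
    (hnonneg : ∀ x ∈ closedBall x₀ r, 0 ≤ u x)
    (hpde : ∀ x ∈ ball x₀ r, 0 < u x → 1 ≤ laplacian u x)
    (hfb : x₀ ∈ frontier {x | 0 < u x}) :
    r ^ 2 / (8 * N) ≤ sSup (u '' sphere x₀ r) :=
  stmt13_general N r hr x₀ u hcont hpde hfb
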